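/- Let A be an associative unital algebra over ℂ with a comultiplication Δ, and let h ∈ A be a left cointegral such that the left leg of Δ(h) is all of A. Then the linear map T₁ : A ⊗ A → A ⊗ A determined by T₁(a ⊗ b) = Δ(a)(1 ⊗ b) is surjective. -/
import Mathlib


open TensorProduct

noncomputable section

variable {A : Type*} [Ring A] [Algebra ℂ A]

/-- The slice map `id ⊗ ω : A ⊗ A → A`. -/
def sliceR (ω : A →ₗ[ℂ] ℂ) : A ⊗[ℂ] A →ₗ[ℂ] A :=
  (TensorProduct.rid ℂ A).toLinearMap ∘ₗ TensorProduct.map LinearMap.id ω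

/-- The slice map `ω ⊗ id : A ⊗ A → A`. -/
def sliceL (ω : A →ₗ[ℂ] ℂ) : A ⊗[ℂ] A →ₗ[ℂ] A :=
  (TensorProduct.lid ℂ A).toLinearMap ∘ₗ TensorProduct.map ω LinearMap.id

/-- Coassociativity of a comultiplication `Δ : A → A ⊗ A`:
`(Δ ⊗ id) ∘ Δ = (id ⊗ Δ) ∘ Δ` (up to the associator). -/
def IsCoassoc (Δ : A →ₐ[ℂ] A ⊗[ℂ] A) : Prop :=
  ∀ a : A,
    TensorProduct.assoc ℂ A A A (TensorProduct.map Δ.toLinearMap LinearMap.id (Δ a)) =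
      TensorProduct.map LinearMap.id Δ.toLinearMap (Δ a)

/-- A left integral: a nonzero functional with `(id ⊗ φ)(Δ a) = φ(a)·1` for all `a`. -/
def IsLeftIntegral (Δ : A →ₐ[ℂ] A ⊗[ℂ] A) (φ : A →ₗ[ℂ] ℂ) : Prop :=
  φ ≠ 0 ∧ ∀ a : A, sliceR φ (Δ a) = φ a • (1 : A)

/-- A right integral: a nonzero functional with `(ψ ⊗ id)(Δ a) = ψ(a)·1` for all `a`. -/
def IsRightIntegral (Δ : A →ₐ[ℂ] A ⊗[ℂ] A) (ψ : A →ₗ[ℂ] ℂ) : Prop :=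
  ψ ≠ 0 ∧ ∀ a : A, sliceL ψ (Δ a) = ψ a • (1 : A)

/-- A faithful functional: the bilinear form `(a, b) ↦ ω(ab)` is non-degenerate. -/
def IsFaithful (ω : A →ₗ[ℂ] ℂ) : Prop :=
  (∀ b : A, (∀ a : A, ω (a * b) = 0) → b = 0) ∧
  (∀ b : A, (∀ a : A, ω (b * a) = 0) → b = 0)

/-- The left leg of an element `x ∈ A ⊗ A`: the span of `{(id ⊗ ω)(x) : ω ∈ A*}`. -/
def leftLegOf (x : A ⊗[ℂ] A) : Submodule ℂ A :=
  Submodule.span ℂ {y : A | ∃ ω : A →ₗ[ℂ] ℂ, y = sliceR ω x}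

/-- The right leg of an element `x ∈ A ⊗ A`: the span of `{(ω ⊗ id)(x) : ω ∈ A*}`. -/
def rightLegOf (x : A ⊗[ℂ] A) : Submodule ℂ A :=
  Submodule.span ℂ {y : A | ∃ ω : A →ₗ[ℂ] ℂ, y = sliceL ω x}

/-- The left leg of `Δ`: the span of `{(id ⊗ ω)(Δ a) : a ∈ A, ω ∈ A*}`. -/
def leftLeg (Δ : A →ₐ[ℂ] A ⊗[ℂ] A) : Submodule ℂ A :=
  Submodule.span ℂ {y : A | ∃ (a : A) (ω : A →ₗ[ℂ] ℂ), y = sliceR ω (Δ a)}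

/-- The right leg of `Δ`: the span of `{(ω ⊗ id)(Δ a) : a ∈ A, ω ∈ A*}`. -/
def rightLeg (Δ : A →ₐ[ℂ] A ⊗[ℂ] A) : Submodule ℂ A :=
  Submodule.span ℂ {y : A | ∃ (a : A) (ω : A →ₗ[ℂ] ℂ), y = sliceL ω (Δ a)}

/-- A comultiplication is full if both of its legs are all of `A`. -/
def IsFull (Δ : A →ₐ[ℂ] A ⊗[ℂ] A) : Prop :=
  leftLeg Δ = ⊤ ∧ rightLeg Δ = ⊤

/-- The linear map `T₁` with `T₁ (a ⊗ b) = Δ(a) * (1 ⊗ b)`. -/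
def T1 (Δ : A →ₐ[ℂ] A ⊗[ℂ] A) : A ⊗[ℂ] A →ₗ[ℂ] A ⊗[ℂ] A :=
  LinearMap.mul' ℂ (A ⊗[ℂ] A) ∘ₗ
    TensorProduct.map Δ.toLinearMap (TensorProduct.mk ℂ A A 1)

/-- The linear map `T₁'` with `T₁' (a ⊗ b) = Δ(a) * (b ⊗ 1)`. -/
def T1' (Δ : A →ₐ[ℂ] A ⊗[ℂ] A) : A ⊗[ℂ] A →ₗ[ℂ] A ⊗[ℂ] A :=
  LinearMap.mul' ℂ (A ⊗[ℂ] A) ∘ₗ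
    TensorProduct.map Δ.toLinearMap ((TensorProduct.mk ℂ A A).flip 1)

/-- The linear map `T₂` with `T₂ (a ⊗ b) = (a ⊗ 1) * Δ(b)`. -/
def T2 (Δ : A →ₐ[ℂ] A ⊗[ℂ] A) : A ⊗[ℂ] A →ₗ[ℂ] A ⊗[ℂ] A :=
  LinearMap.mul' ℂ (A ⊗[ℂ] A) ∘ₗ
    TensorProduct.map ((TensorProduct.mk ℂ A A).flip 1) Δ.toLinearMap

/-- The linear map `T₂'` with `T₂' (a ⊗ b) = (1 ⊗ a) * Δ(b)`. -/
def T2' (Δ : A →ₐ[ℂ] A ⊗[ℂ] A) : A ⊗[ℂ] A →ₗ[ℂ] A ⊗[ℂ] A :=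
  LinearMap.mul' ℂ (A ⊗[ℂ] A) ∘ₗ
    TensorProduct.map (TensorProduct.mk ℂ A A 1) Δ.toLinearMap

/-- A left cointegral: a nonzero element `h` with `Δ(a)(1 ⊗ h) = a ⊗ h` for all `a`. -/
def IsLeftCointegral (Δ : A →ₐ[ℂ] A ⊗[ℂ] A) (h : A) : Prop :=
  h ≠ 0 ∧ ∀ a : A, Δ a * ((1 : A) ⊗ₜ[ℂ] h) = a ⊗ₜ[ℂ] h

/-- A right cointegral: a nonzero element `k` with `(k ⊗ 1)Δ(a) = k ⊗ a` for all `a`. -/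
def IsRightCointegral (Δ : A →ₐ[ℂ] A ⊗[ℂ] A) (k : A) : Prop :=
  k ≠ 0 ∧ ∀ a : A, (k ⊗ₜ[ℂ] (1 : A)) * Δ a = k ⊗ₜ[ℂ] a

/-- `Δ₁₃(a) = (1 ⊗ σ)(Δ(a) ⊗ 1)`, viewed in `A ⊗ (A ⊗ A)`. -/
def delta13 (Δ : A →ₐ[ℂ] A ⊗[ℂ] A) (a : A) : A ⊗[ℂ] (A ⊗[ℂ] A) :=
  TensorProduct.map LinearMap.id (TensorProduct.comm ℂ A A).toLinearMap
    (TensorProduct.assoc ℂ A A A (Δ a ⊗ₜ[ℂ] (1 : A)))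

lemma sliceR_tmul (ω : A →ₗ[ℂ] ℂ) (x y : A) : sliceR ω (x ⊗ₜ[ℂ] y) = ω y • x := by
  simp [sliceR]

lemma T1_tmul (Δ : A →ₐ[ℂ] A ⊗[ℂ] A) (p r : A) :
    T1 Δ (p ⊗ₜ[ℂ] r) = Δ p * ((1 : A) ⊗ₜ[ℂ] r) := by
  simp [T1, LinearMap.mul'_apply]

lemma aux_key (ω : A →ₗ[ℂ] ℂ) (q r s : A) (z : A ⊗[ℂ] A) :
    TensorProduct.map LinearMap.id (sliceR ω)
      (TensorProduct.assoc ℂ A A A (z ⊗ₜ[ℂ] q) * ((1 : A) ⊗ₜ[ℂ] (r ⊗ₜ[ℂ] s)))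
      = ω (q * s) • (z * ((1 : A) ⊗ₜ[ℂ] r)) := by
  induction z using TensorProduct.induction_on with
  | zero =>
      rw [TensorProduct.zero_tmul, LinearEquiv.map_zero, zero_mul, map_zero,
        zero_mul, smul_zero]
  | tmul u v =>
      simp [Algebra.TensorProduct.tmul_mul_tmul, sliceR_tmul, smul_tmul',
        TensorProduct.tmul_smul]
  | add z₁ z₂ h1 h2 =>
      simp only [TensorProduct.add_tmul, map_add, add_mul, h1, h2, smul_add]

lemma aux_mem (Δ : A →ₐ[ℂ] A ⊗[ℂ] A) (ω : A →ₗ[ℂ] ℂ) (x y : A ⊗[ℂ] A) :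
    TensorProduct.map LinearMap.id (sliceR ω)
      (TensorProduct.assoc ℂ A A A
        (TensorProduct.map Δ.toLinearMap LinearMap.id x) * ((1 : A) ⊗ₜ[ℂ] y))
      ∈ LinearMap.range (T1 Δ) := by
  induction x using TensorProduct.induction_on with
  | zero =>
      rw [map_zero, LinearEquiv.map_zero, zero_mul, map_zero]
      exact Submodule.zero_mem _
  | tmul p q =>
      induction y using TensorProduct.induction_on with
      | zero =>
          rw [TensorProduct.tmul_zero, mul_zero, map_zero]
          exact Submodule.zero_mem _
      | tmul r s =>
          simp only [TensorProduct.map_tmul, LinearMap.id_coe, id_eq, aux_key]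
          exact Submodule.smul_mem _ _ ⟨p ⊗ₜ[ℂ] r, (T1_tmul Δ p r).symm⟩
      | add y₁ y₂ h1 h2 =>
          simp only [TensorProduct.tmul_add, mul_add, map_add]
          exact Submodule.add_mem _ h1 h2
  | add x₁ x₂ h1 h2 =>
      simp only [map_add, add_mul]
      exact Submodule.add_mem _ h1 h2

lemma alg_map_eq (Δ : A →ₐ[ℂ] A ⊗[ℂ] A) (u : A ⊗[ℂ] A) :
    Algebra.TensorProduct.map (AlgHom.id ℂ A) Δ u =
      TensorProduct.map LinearMap.id Δ.toLinearMap u := by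
  induction u using TensorProduct.induction_on with
  | zero => simp
  | tmul a b => simp
  | add u v h1 h2 => simp [h1, h2]

/-- If `h` is a left cointegral with the left leg of `Δ(h)` all of `A`, then
`T₁ : a ⊗ b ↦ Δ(a)(1 ⊗ b)` is surjective. -/
theorem T1_surjective_of_left_cointegral
    (Δ : A →ₐ[ℂ] A ⊗[ℂ] A) (hΔ : IsCoassoc Δ)
    (h : A) (hh : IsLeftCointegral Δ h) (hfaith : leftLegOf (Δ h) = ⊤) :
    Function.Surjective (T1 Δ) := by
  -- key membership fact
  have key : ∀ (a : A) (ω : A →ₗ[ℂ] ℂ),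
      a ⊗ₜ[ℂ] sliceR ω (Δ h) ∈ LinearMap.range (T1 Δ) := by
    intro a ω
    -- apply (id ⊗ Δ) to the cointegral identity
    have h1 : TensorProduct.map LinearMap.id Δ.toLinearMap (Δ a) *
        ((1 : A) ⊗ₜ[ℂ] Δ h) = a ⊗ₜ[ℂ] Δ h := by
      have := congrArg (Algebra.TensorProduct.map (AlgHom.id ℂ A) Δ) (hh.2 a)
      rw [map_mul] at this
      rw [alg_map_eq] at this
      simpa using this
    have h2 := aux_mem Δ ω (Δ a) (Δ h)
    rw [hΔ a, h1] at h2
    simpa [TensorProduct.map_tmul] using h2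
  have mem : ∀ x : A ⊗[ℂ] A, x ∈ LinearMap.range (T1 Δ) := by
    intro x
    induction x using TensorProduct.induction_on with
    | zero => exact Submodule.zero_mem _
    | tmul a b =>
        have hb : b ∈ leftLegOf (Δ h) := hfaith ▸ Submodule.mem_top
        induction hb using Submodule.span_induction with
        | mem c hc =>
            obtain ⟨ω, rfl⟩ := hc
            exact key a ω
        | zero => simp
        | add c d _ _ h1 h2 =>
            simpa [TensorProduct.tmul_add] using Submodule.add_mem _ h1 h2
        | smul c x _ h1 =>
            simpa [TensorProduct.tmul_smul] using Submodule.smul_mem _ c h1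
    | add x y h1 h2 => exact Submodule.add_mem _ h1 h2
  intro y
  exact mem y
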